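/- Let U be n×p with U^T U = I_p, and suppose the rows of U indexed by I_p = {i₁ < … < i_p} form an invertible p×p submatrix U_p. If scalars α_i for i ∉ I_p satisfy Σ_{i∉I_p} α_i (I_n - U U^T)(e_i f_c^T) = 0 for some fixed c, then α_i = 0 for all i ∉ I_p. (Linear independence of the tangent vectors Δ''_{ic}.) -/

import Mathlib

/-!
Column `c` of the relation says that `v = ∑ α i • e i` lies in the kernel of `1 - U Uᵀ`, so
`v = U (Uᵀ v)`. The rows of `v` indexed by `g` vanish, i.e. `U_p (Uᵀ v) = 0`; invertibility of
`U_p` gives `Uᵀ v = 0`, hence `v = 0`.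
-/

open Matrix

namespace Matrix

variable {m k R : Type*} [Fintype k] [DecidableEq k]

theorem eq_zero_of_mulVec_comp_eq_zero [Semiring R] {U : Matrix m k R} {g : k → m}
    (hU : IsUnit (U.submatrix g id)) {w : k → R} (hw : (U *ᵥ w) ∘ g = 0) : w = 0 :=
  mulVec_injective_of_isUnit hU (show U.submatrix g id *ᵥ w = U.submatrix g id *ᵥ 0 by
    rw [mulVec_zero]; exact hw)

theorem eq_zero_of_one_sub_mul_mulVec_eq_zero [Ring R] [Fintype m] [DecidableEq m]
    {U : Matrix m k R} {V : Matrix k m R} {g : k → m} (hU : IsUnit (U.submatrix g id))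
    {v : m → R} (hv : (1 - U * V) *ᵥ v = 0) (hvg : v ∘ g = 0) : v = 0 := by
  have hv_eq : v = U *ᵥ (V *ᵥ v) := by
    rwa [sub_mulVec, one_mulVec, sub_eq_zero, ← mulVec_mulVec] at hv
  have hVv : V *ᵥ v = 0 := eq_zero_of_mulVec_comp_eq_zero hU (hv_eq ▸ hvg)
  rw [hv_eq, hVv, mulVec_zero]

theorem sum_smul_mul_single_mulVec_single [CommSemiring R] [Fintype m] [DecidableEq m] {ι : Type*}
    (A : Matrix ι m R) (s : Finset m) (α : m → R) (c : k) :
    (∑ i ∈ s, α i • (A * single i c (1 : R))) *ᵥ Pi.single c 1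
      = A *ᵥ ∑ i ∈ s, Pi.single i (α i) := by
  rw [sum_mulVec, mulVec_sum]
  refine Finset.sum_congr rfl fun i _ => ?_
  rw [smul_mulVec, ← mulVec_mulVec, single_mulVec, ← mulVec_smul]
  congr 1
  ext j
  simp [Pi.single_apply, Function.update_apply]

end Matrix

theorem stiefel_frame_second_linear_independent_general {n p : ℕ}
    (U : Matrix (Fin n) (Fin p) ℝ)
    (g : Fin p → Fin n)
    (hUp : IsUnit (U.submatrix g id)) (c : Fin p)
    (α : Fin n → ℝ)
    (hsum : ∑ i ∈ Finset.univ.filter (fun i => i ∉ Finset.image g Finset.univ),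
        α i • ((1 - U * Uᵀ) * Matrix.single i c (1 : ℝ)) = 0) :
    ∀ i, i ∉ Finset.image g Finset.univ → α i = 0 := by
  classical
  set s := Finset.univ.filter (fun i => i ∉ Finset.image g Finset.univ)
  set v : Fin n → ℝ := ∑ i ∈ s, Pi.single i (α i)
  have hv_apply : ∀ j, v j = if j ∈ s then α j else 0 := fun j => by
    simp [v, Finset.sum_apply, Pi.single_apply]
  have hker : (1 - U * Uᵀ) *ᵥ v = 0 := by
    rw [← sum_smul_mul_single_mulVec_single (c := c), hsum, zero_mulVec]
  have hvg : v ∘ g = 0 := funext fun k => by simp [hv_apply, s]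
  have hv0 : v = 0 := eq_zero_of_one_sub_mul_mulVec_eq_zero hUp hker hvg
  intro i hi
  have hi_s : i ∈ s := Finset.mem_filter.mpr ⟨Finset.mem_univ i, hi⟩
  simpa [hv_apply, hi_s] using congrFun hv0 i

theorem stiefel_frame_second_linear_independent {n p : ℕ}
    (U : Matrix (Fin n) (Fin p) ℝ) (hU : Uᵀ * U = 1)
    (g : Fin p → Fin n) (hg : StrictMono g)
    (hUp : IsUnit (U.submatrix g id)) (c : Fin p)
    (α : Fin n → ℝ)
    (hsum : ∑ i ∈ Finset.univ.filter (fun i => i ∉ Finset.image g Finset.univ),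
        α i • ((1 - U * Uᵀ) * Matrix.single i c (1 : ℝ)) = 0) :
    ∀ i, i ∉ Finset.image g Finset.univ → α i = 0 :=
  stiefel_frame_second_linear_independent_general U g hUp c α hsum
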